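/- arXiv:2108.10578 — 4 statements merged into one kernel-verified Lean document; each statement's English description precedes it below -/
import Mathlib

section
/- The characteristic polynomial D(μ) = P_0(μ)Q_{l+1}(μ) − P_{l+1}(μ)Q_0(μ) of the discrete problem is a monic polynomial of degree l. -/
open Polynomial

noncomputable def psi : ℕ → Polynomial ℂ
  | 0 => 0
  | 1 => 1
  | (n + 2) => Polynomial.X * psi (n + 1) - psi n

noncomputable def Dpoly (l m : ℕ) (w : ℕ → ℂ) : Polynomial ℂ :=
  psi m * (psi (l - m + 2) +
      ∑ j ∈ Finset.Icc 1 (l - m + 1), Polynomial.C (w (l + 1 - j)) * psi j) +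
  psi (l - m + 1) *
    (-psi (m - 1) + ∑ j ∈ Finset.Icc 1 (m - 1), Polynomial.C (w j) * psi j)

/-!
`ψ_{n+1}` is monic of degree `n` (a Chebyshev polynomial of the second kind in `μ/2`). In `D` the
product `ψ_m ψ_{l-m+2}` is therefore monic of degree `l`, while each remaining term is a product
of a `ψ_a` with a combination of `ψ_b`'s whose degrees add up to at most `l - 1`.
-/

theorem psi_succ_monic_natDegree : ∀ n : ℕ, (psi (n + 1)).Monic ∧ (psi (n + 1)).natDegree = n
  | 0 => by simp [psi]
  | 1 => by simp [psi]
  | n + 2 => by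
    obtain ⟨hmonic, hdeg⟩ := psi_succ_monic_natDegree (n + 1)
    have hprev := (psi_succ_monic_natDegree n).2
    have hX : (X * psi (n + 2)).natDegree = n + 2 := by
      rw [monic_X.natDegree_mul hmonic, natDegree_X, hdeg, add_comm]
    have hlt : (psi (n + 1)).natDegree < (X * psi (n + 2)).natDegree := by omega
    rw [psi]
    exact ⟨(monic_X.mul hmonic).sub_of_left (degree_lt_degree hlt),
      by rw [natDegree_sub_eq_left_of_natDegree_lt hlt, hX]⟩

theorem psi_monic {n : ℕ} (hn : 1 ≤ n) : (psi n).Monic := by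
  obtain ⟨k, rfl⟩ := Nat.exists_eq_add_of_le' hn
  exact (psi_succ_monic_natDegree k).1

theorem psi_natDegree : ∀ n : ℕ, (psi n).natDegree = n - 1
  | 0 => by simp [psi]
  | n + 1 => (psi_succ_monic_natDegree n).2

theorem natDegree_sum_C_mul_psi_le (N : ℕ) (c : ℕ → ℂ) :
    (∑ j ∈ Finset.Icc 1 N, C (c j) * psi j).natDegree ≤ N - 1 :=
  natDegree_sum_le_of_forall_le _ _ fun j hj =>
    (natDegree_C_mul_le _ _).trans <| (psi_natDegree j).trans_le <| by
      have := (Finset.mem_Icc.mp hj).2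
      omega

theorem natDegree_Dpoly_sub_le {l m : ℕ} (hm : 1 ≤ m) (hml : m ≤ l) (w : ℕ → ℂ) :
    (Dpoly l m w - psi m * psi (l - m + 2)).natDegree ≤ l - 1 := by
  have hsplit : Dpoly l m w - psi m * psi (l - m + 2) =
      psi m * ∑ j ∈ Finset.Icc 1 (l - m + 1), C (w (l + 1 - j)) * psi j +
      psi (l - m + 1) * (-psi (m - 1) + ∑ j ∈ Finset.Icc 1 (m - 1), C (w j) * psi j) := by
    rw [Dpoly]; ring
  have hinner : (-psi (m - 1) + ∑ j ∈ Finset.Icc 1 (m - 1), C (w j) * psi j).natDegree ≤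
      m - 1 - 1 :=
    natDegree_add_le_of_degree_le ((natDegree_neg _).trans_le (psi_natDegree _).le)
      (natDegree_sum_C_mul_psi_le _ _)
  rw [hsplit]
  refine natDegree_add_le_of_degree_le
    ((natDegree_mul_le_of_le (psi_natDegree m).le (natDegree_sum_C_mul_psi_le _ _)).trans ?_)
    ((natDegree_mul_le_of_le (psi_natDegree _).le hinner).trans ?_) <;> omega

theorem D_monic_degree (l m : ℕ) (hm : 1 ≤ m) (hml : m ≤ l) (w : ℕ → ℂ) :
    (Dpoly l m w).Monic ∧ (Dpoly l m w).natDegree = l := by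
  have hrest := natDegree_Dpoly_sub_le hm hml w
  set M := psi m * psi (l - m + 2)
  have hM : M.Monic := (psi_monic hm).mul (psi_monic (by omega))
  have hMdeg : M.natDegree = l := by
    rw [(psi_monic hm).natDegree_mul (psi_monic (by omega)), psi_natDegree, psi_natDegree]
    omega
  have hlt : (Dpoly l m w - M).natDegree < M.natDegree := by omega
  rw [← add_sub_cancel M (Dpoly l m w)]
  exact ⟨hM.add_of_left (degree_lt_degree hlt),
    by rw [natDegree_add_eq_left_of_natDegree_lt hlt, hMdeg]⟩
end

section
/- Suppose gcd(m, l+1) = d > 1 and set r = (l+1)/d. Then for each k = 1,…,d−1, the number 2cos(πk/d) is a root of D(μ), regardless of the values w_1,…,w_l. Consequently the numbers 4sin²(πk/(2d))/h², with h = π/(l+1), are eigenvalues of the finite-difference problem −(y_{j+1}−2y_j+y_{j−1})/h² + q_j y_m = λ y_j, y_0 = y_{l+1} = 0, for any choice of q_1,…,q_l. -/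
/-!
Up to the shift of index, `psi` is Mathlib's rescaled Chebyshev polynomial `S`, so
`ψ_n(2 cos θ) sin θ = sin (n θ)`. For `θ = π k / d` with `0 < k < d`, `sin θ ≠ 0` while `sin (n θ) = 0`
whenever `d ∣ n`; since `d` divides both `m` and `l + 1 - m`, the factors `ψ_m` and `ψ_{l-m+1}` of the
two terms of `D` vanish at `2 cos θ`, whatever `w` is. The same `θ` gives the eigenvector
`y_j = sin (j θ)`: it vanishes at `j = 0`, `j = l + 1` and `j = m`, the last killing the term `q_j y_m`,
and its second difference is `-4 sin² (θ / 2) y_j`.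
-/

open Polynomial Real

theorem psi_eq_chebyshev_S : ∀ n : ℕ, psi n = Chebyshev.S ℂ ((n : ℤ) - 1)
  | 0 => by simp [psi]
  | 1 => by simp [psi]
  | n + 2 => by
    rw [psi, psi_eq_chebyshev_S (n + 1), psi_eq_chebyshev_S n]
    convert (Chebyshev.S_add_two ℂ ((n : ℤ) - 1)).symm using 2 <;> push_cast <;> ring_nf

theorem psi_eval_two_mul_cos_mul_sin (n : ℕ) (θ : ℂ) :
    (psi n).eval (2 * Complex.cos θ) * Complex.sin θ = Complex.sin (n * θ) := by
  rw [psi_eq_chebyshev_S, Chebyshev.S_two_mul_complex_cos]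
  push_cast
  ring_nf

theorem psi_eval_two_mul_cos_eq_zero {n : ℕ} {θ : ℂ} (hθ : Complex.sin θ ≠ 0)
    (hn : Complex.sin (n * θ) = 0) : (psi n).eval (2 * Complex.cos θ) = 0 := by
  rw [← psi_eval_two_mul_cos_mul_sin, mul_eq_zero] at hn
  exact hn.resolve_right hθ

theorem Dpoly_eval_eq_zero_of_psi_eval (l m : ℕ) (w : ℕ → ℂ) {μ : ℂ} (hm : (psi m).eval μ = 0)
    (hlm : (psi (l - m + 1)).eval μ = 0) : (Dpoly l m w).eval μ = 0 := by
  simp [Dpoly, hm, hlm]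

theorem sin_add_sub_two_mul_sin_add_sin_sub (x θ : ℂ) :
    Complex.sin (x + θ) - 2 * Complex.sin x + Complex.sin (x - θ)
      = -(4 * Complex.sin (θ / 2) ^ 2) * Complex.sin x := by
  have hcos : Complex.cos θ = 1 - 2 * Complex.sin (θ / 2) ^ 2 := by
    have h := Complex.cos_two_mul (θ / 2)
    rw [show 2 * (θ / 2) = θ by ring] at h
    linear_combination h + 2 * Complex.cos_sq_add_sin_sq (θ / 2)
  rw [Complex.sin_add, Complex.sin_sub, hcos]
  ring

theorem sin_nat_mul_pi_mul_div_eq_zero {n d : ℕ} (k : ℕ) (h : d ∣ n) :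
    Complex.sin (n * (π * k / d)) = 0 := by
  obtain ⟨t, rfl⟩ := h
  rcases Nat.eq_zero_or_pos d with rfl | hd_pos
  · simp
  have hd : (d : ℂ) ≠ 0 := by exact_mod_cast hd_pos.ne'
  have : ((d * t : ℕ) : ℂ) * (π * k / d) = (t * k : ℕ) * π := by
    push_cast
    field_simp
  rw [this, Complex.sin_nat_mul_pi]

theorem sin_pi_mul_div_ne_zero {k d : ℕ} (hk : 0 < k) (hkd : k < d) :
    Complex.sin (π * k / d) ≠ 0 := by
  have hd : (0 : ℝ) < d := by exact_mod_cast hk.trans hkd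
  have hpos : 0 < π * k / d := by positivity
  have hlt : π * k / d < π := by
    rw [div_lt_iff₀ hd]
    exact mul_lt_mul_of_pos_left (by exact_mod_cast hkd) pi_pos
  exact_mod_cast (Real.sin_pos_of_pos_of_lt_pi hpos hlt).ne'

theorem degenerate_eigenvalues_general (l m d : ℕ) (hml : m ≤ l)
    (hd : Nat.gcd m (l + 1) = d) :
    ∀ k, 1 ≤ k → k ≤ d - 1 →
      (∀ w : ℕ → ℂ,
        (Dpoly l m w).eval ((2 * Real.cos (Real.pi * k / d) : ℝ) : ℂ) = 0) ∧
      (∀ q : ℕ → ℂ,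
        ∃ y : ℕ → ℂ, (∃ j ≤ l + 1, y j ≠ 0) ∧ y 0 = 0 ∧ y (l + 1) = 0 ∧
          ∀ j, 1 ≤ j → j ≤ l →
            -((y (j + 1) - 2 * y j + y (j - 1)) / ((Real.pi / (l + 1) : ℝ) : ℂ) ^ 2)
              + q j * y m =
            ((4 * Real.sin (Real.pi * k / (2 * d)) ^ 2 / (Real.pi / (l + 1)) ^ 2 : ℝ) : ℂ)
              * y j) := by
  intro k hk hkd
  have hdm : d ∣ m := hd ▸ Nat.gcd_dvd_left m (l + 1)
  have hdl : d ∣ l + 1 := hd ▸ Nat.gcd_dvd_right m (l + 1)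
  have hdlm : d ∣ l - m + 1 := by
    rw [show l - m + 1 = l + 1 - m by omega]
    exact Nat.dvd_sub hdl hdm
  set θ : ℂ := π * k / d
  have hθ : Complex.sin θ ≠ 0 := sin_pi_mul_div_ne_zero hk (by omega)
  have hvanish (n : ℕ) (hn : d ∣ n) : Complex.sin (n * θ) = 0 :=
    sin_nat_mul_pi_mul_div_eq_zero k hn
  refine ⟨fun w => ?_, fun q => ⟨fun j => Complex.sin (j * θ), ⟨1, by omega, by simpa⟩, by simp,
    hvanish _ hdl, fun j hj _ => ?_⟩⟩
  · push_cast
    exact Dpoly_eval_eq_zero_of_psi_eval l m w (psi_eval_two_mul_cos_eq_zero hθ (hvanish m hdm))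
      (psi_eval_two_mul_cos_eq_zero hθ (hvanish _ hdlm))
  · have hstep := sin_add_sub_two_mul_sin_add_sin_sub (j * θ) θ
    rw [show (j : ℂ) * θ + θ = (j + 1) * θ by ring, show (j : ℂ) * θ - θ = (j - 1) * θ by ring]
      at hstep
    simp only [hvanish m hdm, mul_zero, add_zero]
    push_cast [Nat.cast_sub hj]
    rw [show (π : ℂ) * k / (2 * d) = θ / 2 by ring, hstep]
    ring

theorem degenerate_eigenvalues (l m d : ℕ) (hm : 1 ≤ m) (hml : m ≤ l)
    (hd : Nat.gcd m (l + 1) = d) (hd1 : 1 < d) :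
    ∀ k, 1 ≤ k → k ≤ d - 1 →
      (∀ w : ℕ → ℂ,
        (Dpoly l m w).eval ((2 * Real.cos (Real.pi * k / d) : ℝ) : ℂ) = 0) ∧
      (∀ q : ℕ → ℂ,
        ∃ y : ℕ → ℂ, (∃ j ≤ l + 1, y j ≠ 0) ∧ y 0 = 0 ∧ y (l + 1) = 0 ∧
          ∀ j, 1 ≤ j → j ≤ l →
            -((y (j + 1) - 2 * y j + y (j - 1)) / ((Real.pi / (l + 1) : ℝ) : ℂ) ^ 2)
              + q j * y m =
            ((4 * Real.sin (Real.pi * k / (2 * d)) ^ 2 / (Real.pi / (l + 1)) ^ 2 : ℝ) : ℂ)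
              * y j) :=
  degenerate_eigenvalues_general l m d hml hd
end

section
/- Suppose gcd(m, l+1) = 1 (with 1 ≤ m ≤ l). If two coefficient vectors (w_1,…,w_l) and (w̃_1,…,w̃_l) produce the same characteristic polynomial D(μ) = D̃(μ), then w_j = w̃_j for all j = 1,…,l. -/
/-! The two characteristic polynomials differ by `ψ_m P + ψ_{l-m+1} Q`, where `P` and `Q`
are the `ψ`-expansions of the reversed and of the initial coefficient differences, and
`deg Q < m - 1 = deg ψ_m`. The addition formula `ψ_{a+b+1} = ψ_{a+1} ψ_{b+1} - ψ_a ψ_b` lets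
one run Euclid's algorithm on the indices, so `gcd(m, l+1) = 1` makes `ψ_m` and `ψ_{l-m+1}`
coprime; hence `ψ_m ∣ Q` forces `Q = 0`, and then `P = 0`. Since `ψ_j` is monic of degree
`j - 1`, the `ψ_j` are linearly independent, so every coefficient difference vanishes. -/

open Polynomial

theorem psi_add_two (n : ℕ) : psi (n + 2) = X * psi (n + 1) - psi n := rfl

theorem psi_add (m : ℕ) : ∀ n, psi (m + n + 1) = psi (m + 1) * psi (n + 1) - psi m * psi n
  | 0 => by simp [psi]
  | 1 => by simp [psi]; ring
  | n + 2 => by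
    have e : psi (m + (n + 2) + 1) = X * psi (m + (n + 1) + 1) - psi (m + n + 1) := by
      rw [show m + (n + 2) + 1 = m + n + 1 + 2 by omega]; rfl
    rw [e, show psi (n + 2 + 1) = X * psi (n + 2) - psi (n + 1) from rfl]
    linear_combination X * psi_add m (n + 1) - psi_add m n + psi m * psi_add_two n

theorem psi_cassini : ∀ n, psi (n + 1) ^ 2 - psi (n + 2) * psi n = 1
  | 0 => by simp [psi]
  | n + 1 => by
    rw [show psi (n + 1 + 2) = X * psi (n + 2) - psi (n + 1) from rfl]
    linear_combination psi_cassini n + psi (n + 2) * psi_add_two n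

theorem isCoprime_psi_succ (n : ℕ) : IsCoprime (psi n) (psi (n + 1)) :=
  ⟨-psi (n + 2), psi (n + 1), by linear_combination psi_cassini n⟩

theorem isCoprime_psi_add_iff (a b : ℕ) :
    IsCoprime (psi a) (psi (a + b)) ↔ IsCoprime (psi a) (psi b) := by
  cases b with
  | zero => simp [psi, isCoprime_self, isCoprime_zero_right]
  | succ b =>
    rw [← add_assoc, psi_add, sub_eq_add_neg, ← mul_neg, IsCoprime.add_mul_left_right_iff,
      IsCoprime.mul_right_iff, and_iff_right (isCoprime_psi_succ a)]

theorem isCoprime_psi_mul_add_iff (a q r : ℕ) :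
    IsCoprime (psi a) (psi (a * q + r)) ↔ IsCoprime (psi a) (psi r) := by
  induction q with
  | zero => simp
  | succ q ih => rw [mul_add_one, add_comm (a * q) a, add_assoc, isCoprime_psi_add_iff, ih]

theorem isCoprime_psi {a b : ℕ} (h : Nat.Coprime a b) : IsCoprime (psi a) (psi b) := by
  induction a, b using Nat.gcd.induction with
  | H0 n =>
    rw [(Nat.coprime_zero_left n).mp h]
    exact isCoprime_one_right
  | H1 a b _ ih =>
    have hrec : IsCoprime (psi (b % a)) (psi a) := ih (by rwa [Nat.Coprime, ← Nat.gcd_rec])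
    rw [← Nat.div_add_mod b a, isCoprime_psi_mul_add_iff]
    exact hrec.symm

theorem psi_succ_monic_and_natDegree : ∀ n, (psi (n + 1)).Monic ∧ (psi (n + 1)).natDegree = n
  | 0 => by simp [psi]
  | 1 => by simp [psi]
  | n + 2 => by
    obtain ⟨hmon₁, hdeg₁⟩ := psi_succ_monic_and_natDegree (n + 1)
    have hdeg₀ := (psi_succ_monic_and_natDegree n).2
    have hXdeg : (X * psi (n + 2)).natDegree = n + 2 := by
      rw [natDegree_X_mul hmon₁.ne_zero, hdeg₁]
    have hlt : (psi (n + 1)).natDegree < (X * psi (n + 2)).natDegree := by omega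
    rw [psi_add_two (n + 1)]
    exact ⟨(monic_X.mul hmon₁).sub_of_left (degree_lt_degree hlt),
      by rw [natDegree_sub_eq_left_of_natDegree_lt hlt, hXdeg]⟩

theorem monic_psi_succ (n : ℕ) : (psi (n + 1)).Monic := (psi_succ_monic_and_natDegree n).1

theorem natDegree_psi_succ (n : ℕ) : (psi (n + 1)).natDegree = n :=
  (psi_succ_monic_and_natDegree n).2

theorem degree_psi_succ (n : ℕ) : (psi (n + 1)).degree = n := by
  rw [degree_eq_natDegree (monic_psi_succ n).ne_zero, natDegree_psi_succ]

theorem psi_mem_degreeLT {j N : ℕ} (h : j ≤ N) : psi j ∈ ℂ[X]_N := by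
  cases j with
  | zero => exact zero_mem _
  | succ j => rw [mem_degreeLT, degree_psi_succ]; exact_mod_cast h

theorem eq_zero_and_eq_zero_of_mul_add_mul_eq_zero {R : Type*} [CommRing R] [IsDomain R]
    {a b p q : R[X]} (hab : IsCoprime a b) (hq : q.degree < a.degree) (h : a * p + b * q = 0) :
    p = 0 ∧ q = 0 := by
  have hq₀ : q = 0 :=
    eq_zero_of_dvd_of_degree_lt (hab.dvd_of_dvd_mul_left ⟨-p, by linear_combination h⟩) hq
  subst hq₀
  simpa [ne_zero_of_degree_gt hq] using h

noncomputable def psiSum (c : ℕ → ℂ) (N : ℕ) : ℂ[X] :=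
  ∑ j ∈ Finset.Icc 1 N, C (c j) * psi j

theorem psiSum_sub (c d : ℕ → ℂ) (N : ℕ) : psiSum (c - d) N = psiSum c N - psiSum d N := by
  simp only [psiSum, Pi.sub_apply, map_sub, sub_mul, Finset.sum_sub_distrib]

theorem psiSum_succ (c : ℕ → ℂ) (N : ℕ) :
    psiSum c (N + 1) = psiSum c N + C (c (N + 1)) * psi (N + 1) :=
  Finset.sum_Icc_succ_top (by omega) _

theorem psiSum_mem_degreeLT (c : ℕ → ℂ) (N : ℕ) : psiSum c N ∈ ℂ[X]_N :=
  Submodule.sum_mem _ fun j hj => by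
    rw [C_mul']
    exact Submodule.smul_mem _ _ (psi_mem_degreeLT (Finset.mem_Icc.mp hj).2)

theorem coeff_psiSum_succ (c : ℕ → ℂ) (N : ℕ) : (psiSum c (N + 1)).coeff N = c (N + 1) := by
  have hlow : (psiSum c N).coeff N = 0 :=
    coeff_eq_zero_of_degree_lt (mem_degreeLT.mp (psiSum_mem_degreeLT c N))
  have htop : (psi (N + 1)).coeff N = 1 := by
    simpa [natDegree_psi_succ] using (monic_psi_succ N).coeff_natDegree
  rw [psiSum_succ, coeff_add, coeff_C_mul, hlow, htop, zero_add, mul_one]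

theorem eq_zero_of_psiSum_eq_zero {c : ℕ → ℂ} {N : ℕ} (h : psiSum c N = 0) :
    ∀ j ∈ Finset.Icc 1 N, c j = 0 := by
  induction N with
  | zero => simp
  | succ N ih =>
    have htop : c (N + 1) = 0 := by rw [← coeff_psiSum_succ c N, h, coeff_zero]
    have hlow : psiSum c N = 0 := by simpa [psiSum_succ, htop] using h
    intro j hj
    obtain ⟨hj₁, hj₂⟩ := Finset.mem_Icc.mp hj
    rcases hj₂.lt_or_eq with hlt | rfl
    · exact ih hlow j (Finset.mem_Icc.mpr ⟨hj₁, by omega⟩)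
    · exact htop

theorem Dpoly_sub_Dpoly (l m : ℕ) (w wt : ℕ → ℂ) :
    Dpoly l m w - Dpoly l m wt = psi m * psiSum (fun j => (w - wt) (l + 1 - j)) (l - m + 1)
      + psi (l - m + 1) * psiSum (w - wt) (m - 1) := by
  have hrev : psiSum (fun j => (w - wt) (l + 1 - j)) (l - m + 1)
      = psiSum (fun j => w (l + 1 - j)) (l - m + 1)
        - psiSum (fun j => wt (l + 1 - j)) (l - m + 1) :=
    psiSum_sub _ _ _
  rw [hrev, psiSum_sub]
  unfold Dpoly psiSum
  ring

theorem uniqueness_nondegenerate (l m : ℕ) (hm : 1 ≤ m) (hml : m ≤ l)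
    (hgcd : Nat.gcd m (l + 1) = 1) (w wt : ℕ → ℂ)
    (hD : Dpoly l m w = Dpoly l m wt) :
    ∀ j, 1 ≤ j → j ≤ l → w j = wt j := by
  have hcop : IsCoprime (psi m) (psi (l - m + 1)) := by
    refine isCoprime_psi ?_
    rwa [show l - m + 1 = l + 1 - m by omega, Nat.coprime_sub_self_right (by omega)]
  have hdeg : (psiSum (w - wt) (m - 1)).degree < (psi m).degree := by
    rw [← Nat.sub_add_cancel hm, degree_psi_succ, Nat.add_sub_cancel]
    exact mem_degreeLT.mp (psiSum_mem_degreeLT _ _)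
  have hdiff := (Dpoly_sub_Dpoly l m w wt).symm.trans (sub_eq_zero.mpr hD)
  obtain ⟨hP, hQ⟩ := eq_zero_and_eq_zero_of_mul_add_mul_eq_zero hcop hdeg hdiff
  intro j hj hjl
  rcases lt_or_ge j m with hjm | hjm
  · exact sub_eq_zero.mp (eq_zero_of_psiSum_eq_zero hQ j (Finset.mem_Icc.mpr ⟨hj, by omega⟩))
  · have h :=
      eq_zero_of_psiSum_eq_zero hP (l + 1 - j) (Finset.mem_Icc.mpr ⟨by omega, by omega⟩)
    simpa [Nat.sub_sub_self (by omega : j ≤ l + 1), sub_eq_zero] using h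
end

section
/- Let l = 2m−1. Then D(μ) = ψ_m(μ)·(Q_0(μ) + Q_{l+1}(μ)), where Q_0(μ)+Q_{l+1}(μ) = ψ_{m+1}(μ) − ψ_{m−1}(μ) + w_m ψ_m(μ) + Σ_{j=1}^{m−1}(w_j + w_{l+1−j})ψ_j(μ). -/
open Polynomial

open Finset

/-- When `l = 2m - 1` the boundary values `P_0 = ψ_m` and `P_{l+1} = -ψ_{l-m+1}` agree up to sign. -/
theorem Dpoly_eq_psi_mul_of_eq_two_mul_sub_one {l m : ℕ} (hm : 1 ≤ m) (hl : l = 2 * m - 1)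
    (w : ℕ → ℂ) :
    Dpoly l m w = psi m *
      ((psi (m + 1) + ∑ j ∈ Icc 1 m, C (w (l + 1 - j)) * psi j) +
        (-psi (m - 1) + ∑ j ∈ Icc 1 (m - 1), C (w j) * psi j)) := by
  rw [Dpoly, show l - m + 2 = m + 1 by omega, show l - m + 1 = m by omega]
  ring

theorem D_factorization_middle (l m : ℕ) (hm : 1 ≤ m) (hl : l = 2 * m - 1)
    (w : ℕ → ℂ) :
    Dpoly l m w = psi m *
      (psi (m + 1) - psi (m - 1) + Polynomial.C (w m) * psi m +
        ∑ j ∈ Finset.Icc 1 (m - 1), Polynomial.C (w j + w (l + 1 - j)) * psi j) := by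
  rw [Dpoly_eq_psi_mul_of_eq_two_mul_sub_one hm hl, ← insert_Icc_sub_one_right_eq_Icc hm,
    sum_insert (by simp; omega), show l + 1 - m = m by omega]
  simp only [C_add, add_mul, sum_add_distrib]
  ring
end
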